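/- Let A and B be Banach algebras, T ∈ hom(B, A), and φ ∈ σ(A). Then A is φ-inner amenable if and only if A ×_T B is (φ, φ∘T)-inner amenable. Specifically: if m ∈ A'' satisfies m(φ)=1 and m□a = a□m for all a ∈ A, then (m,0) is a (φ,φ∘T)-inner mean for A ×_T B; conversely if (m,n) is a (φ,φ∘T)-inner mean for A ×_T B then m + T''(n) is a φ-inner mean for A. -/

import Mathlib

/-!
`A ≅ A × {0}` is an ideal of `A ×_T B` on which `(a, b)` acts, on either side, as multiplication
by `a + T b`. Hence testing the commutation `Θ(m, n) □ u = u □ Θ(m, n)` on functionals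
`F ∘ inl` reduces it to a commutation in `A''`: for `Θ(m, 0)` this is the commutation of `m`
with `u₁ + T u₂`, and for `u = (a, 0)` and `F = f ∘ fst` the `B''`-component contributes
`n (f ∘ (· a) ∘ T) = T''(n) (f ∘ (· a))`, which is the commutation of `m + T''(n)` with `a`.
Every element of `(A × B)''` is some `Θ(m, n)`, which gives the equivalence.
-/

open ContinuousLinearMap NormedSpace

variable {A B : Type*}
  [NonUnitalNormedRing A] [NormedSpace ℂ A] [IsScalarTower ℂ A A] [SMulCommClass ℂ A A]
  [CompleteSpace A]
  [NonUnitalNormedRing B] [NormedSpace ℂ B] [IsScalarTower ℂ B B] [SMulCommClass ℂ B B]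
  [CompleteSpace B]

/-- The morphism-product multiplication on `A × B`:
`(a₁,b₁)·(a₂,b₂) = (a₁a₂ + a₁T(b₂) + T(b₁)a₂, b₁b₂)`. -/
noncomputable def tMul (T : B →L[ℂ] A) (u v : A × B) : A × B :=
  (u.1 * v.1 + u.1 * T v.2 + T u.2 * v.1, u.2 * v.2)

/-- The ℓ¹ norm `‖(a,b)‖ = ‖a‖ + ‖b‖` on `A × B`. -/
noncomputable def tNorm (u : A × B) : ℝ := ‖u.1‖ + ‖u.2‖

/-- Auxiliary map: for `Φ` in the second dual of `E` and a bundled bilinear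
multiplication `M` on `E`, this is `f ↦ (a ↦ Φ (f ∘ M a))`, i.e. `f ↦ Φ · f`. -/
noncomputable def rAct {E : Type*} [NormedAddCommGroup E] [NormedSpace ℂ E]
    (M : E →L[ℂ] E →L[ℂ] E) (Φ : StrongDual ℂ (StrongDual ℂ E)) : StrongDual ℂ E →L[ℂ] StrongDual ℂ E :=
  (compL ℂ E (StrongDual ℂ E) ℂ Φ).comp
    (((compL ℂ E (E →L[ℂ] E) (StrongDual ℂ E)).flip M).comp (compL ℂ E E ℂ))

/-- The first Arens product `Φ □ Ψ` on the second dual of `E`, where the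
multiplication of `E` is given by the bundled bilinear map `M`:
`⟨Φ□Ψ, f⟩ = ⟨Φ, Ψ·f⟩` with `(Ψ·f)(a) = Ψ(f·a)` and `(f·a)(x) = f(ax)`. -/
noncomputable def arens1 {E : Type*} [NormedAddCommGroup E] [NormedSpace ℂ E]
    (M : E →L[ℂ] E →L[ℂ] E) (Φ Ψ : StrongDual ℂ (StrongDual ℂ E)) : StrongDual ℂ (StrongDual ℂ E) :=
  Φ.comp (rAct M Ψ)

/-- The second Arens product `Φ ◊ Ψ` on the second dual of `E`:
`⟨Φ◊Ψ, f⟩ = ⟨Ψ, f·Φ⟩` with `(f·Φ)(a) = Φ(a·f)` and `(a·f)(x) = f(xa)`. -/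
noncomputable def arens2 {E : Type*} [NormedAddCommGroup E] [NormedSpace ℂ E]
    (M : E →L[ℂ] E →L[ℂ] E) (Φ Ψ : StrongDual ℂ (StrongDual ℂ E)) : StrongDual ℂ (StrongDual ℂ E) :=
  Ψ.comp (rAct M.flip Φ)

/-- Bundled bilinear map `(u,v) ↦ M (f u) (g v)`. -/
noncomputable def bcomp {P E : Type*} [NormedAddCommGroup P] [NormedSpace ℂ P]
    [NormedAddCommGroup E] [NormedSpace ℂ E]
    (M : E →L[ℂ] E →L[ℂ] E) (f g : P →L[ℂ] E) : P →L[ℂ] P →L[ℂ] E :=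
  ((compL ℂ P E E).flip g).comp (M.comp f)

/-- The morphism-product multiplication `tMul T`, as a bundled bilinear map;
`tMulCLM T u v = tMul T u v`. -/
noncomputable def tMulCLM (T : B →L[ℂ] A) : (A × B) →L[ℂ] (A × B) →L[ℂ] (A × B) :=
  ((compL ℂ (A × B) A (A × B) (inl ℂ A B)).comp
    (bcomp (mul ℂ A) (fst ℂ A B) (fst ℂ A B + T.comp (snd ℂ A B)) +
     bcomp (mul ℂ A) (T.comp (snd ℂ A B)) (fst ℂ A B))) +
  ((compL ℂ (A × B) B (A × B) (inr ℂ A B)).comp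
    (bcomp (mul ℂ B) (snd ℂ A B) (snd ℂ A B)))

/-- The adjoint `T' : A' → B'`, `T'(f) = f ∘ T`. -/
noncomputable def dualT (T : B →L[ℂ] A) : StrongDual ℂ A →L[ℂ] StrongDual ℂ B := (compL ℂ B A ℂ).flip T

/-- The double adjoint `T'' : B'' → A''`, `T''(F) = F ∘ T'`. -/
noncomputable def ddT (T : B →L[ℂ] A) : StrongDual ℂ (StrongDual ℂ B) →L[ℂ] StrongDual ℂ (StrongDual ℂ A) :=
  (compL ℂ (StrongDual ℂ A) (StrongDual ℂ B) ℂ).flip (dualT T)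

/-- The identification `Θ : A'' × B'' → (A × B)''`, `Θ(Φ,Ψ)(F) = Φ(F∘inl) + Ψ(F∘inr)`,
i.e. `Θ(Φ,Ψ)(f,g) = Φ(f) + Ψ(g)` under the identification `(A × B)' ≅ A' × B'`. -/
noncomputable def Theta (Φ : StrongDual ℂ (StrongDual ℂ A)) (Ψ : StrongDual ℂ (StrongDual ℂ B)) :
    StrongDual ℂ (StrongDual ℂ (A × B)) :=
  Φ.comp ((compL ℂ A (A × B) ℂ).flip (inl ℂ A B)) +
  Ψ.comp ((compL ℂ B (A × B) ℂ).flip (inr ℂ A B))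

/-- The functional `(a,b) ↦ φ(a) + φ(T(b))` on `A × B`, for `φ : A → ℂ`. -/
noncomputable def charExt (T : B →L[ℂ] A) (φ : A →L[ℂ] ℂ) : (A × B) →L[ℂ] ℂ :=
  φ.comp (fst ℂ A B) + (φ.comp T).comp (snd ℂ A B)

/-- The functional `(a,b) ↦ ψ(b)` on `A × B`, for `ψ : B → ℂ`. -/
noncomputable def charSnd (ψ : B →L[ℂ] ℂ) : (A × B) →L[ℂ] ℂ :=
  ψ.comp (snd ℂ A B)

section ArensProduct

variable {E : Type*} [NormedAddCommGroup E] [NormedSpace ℂ E] (M : E →L[ℂ] E →L[ℂ] E)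

def IsInnerMean (φ : StrongDual ℂ E) (m : StrongDual ℂ (StrongDual ℂ E)) : Prop :=
  m φ = 1 ∧ ∀ a : E, arens1 M m (inclusionInDoubleDual ℂ E a) =
    arens1 M (inclusionInDoubleDual ℂ E a) m

theorem arens1_inclusionInDoubleDual_comm_iff (m : StrongDual ℂ (StrongDual ℂ E)) (a : E) :
    arens1 M m (inclusionInDoubleDual ℂ E a) = arens1 M (inclusionInDoubleDual ℂ E a) m ↔
      ∀ f : StrongDual ℂ E, m (f.comp (M.flip a)) = m (f.comp (M a)) :=
  ContinuousLinearMap.ext_iff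

end ArensProduct

section MorphismProduct

variable {A B : Type*} [NonUnitalNormedRing A] [NormedSpace ℂ A] [NonUnitalNormedRing B]
  [NormedSpace ℂ B]

theorem Theta_apply (Φ : StrongDual ℂ (StrongDual ℂ A)) (Ψ : StrongDual ℂ (StrongDual ℂ B))
    (F : StrongDual ℂ (A × B)) :
    Theta Φ Ψ F = Φ (F.comp (inl ℂ A B)) + Ψ (F.comp (inr ℂ A B)) := rfl

theorem ddT_apply (T : B →L[ℂ] A) (n : StrongDual ℂ (StrongDual ℂ B)) (f : StrongDual ℂ A) :
    ddT T n f = n (f.comp T) := rfl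

theorem Theta_surjective (M : StrongDual ℂ (StrongDual ℂ (A × B))) :
    ∃ m n, Theta m n = M := by
  refine ⟨M.comp ((compL ℂ (A × B) A ℂ).flip (fst ℂ A B)),
    M.comp ((compL ℂ (A × B) B ℂ).flip (snd ℂ A B)), ext fun F => ?_⟩
  have hF : (F.comp (inl ℂ A B)).comp (fst ℂ A B) + (F.comp (inr ℂ A B)).comp (snd ℂ A B) = F :=
    ext fun u => by simp [← map_add]
  exact (map_add M _ _).symm.trans (congrArg M hF)

variable (T : B →L[ℂ] A)

theorem tMul_inl_left (a : A) (u : A × B) : tMul T (a, 0) u = (a * (u.1 + T u.2), 0) := by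
  simp [tMul, mul_add]

theorem tMul_inl_right (a : A) (u : A × B) : tMul T u (a, 0) = ((u.1 + T u.2) * a, 0) := by
  simp [tMul, add_mul]

theorem charExt_comp_inl (φ : A →L[ℂ] ℂ) : (charExt T φ).comp (inl ℂ A B) = φ := by
  ext; simp [charExt]

theorem charExt_comp_inr (φ : A →L[ℂ] ℂ) : (charExt T φ).comp (inr ℂ A B) = φ.comp T := by
  ext; simp [charExt]

variable [IsScalarTower ℂ A A] [SMulCommClass ℂ A A] [IsScalarTower ℂ B B] [SMulCommClass ℂ B B]

theorem tMulCLM_apply (u v : A × B) : tMulCLM T u v = tMul T u v := by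
  simp [tMulCLM, tMul, bcomp]

theorem comp_tMulCLM_flip_comp_inl (F : StrongDual ℂ (A × B)) (u : A × B) :
    (F.comp ((tMulCLM T).flip u)).comp (inl ℂ A B) =
      (F.comp (inl ℂ A B)).comp ((mul ℂ A).flip (u.1 + T u.2)) :=
  ext fun x => by
    simp only [comp_apply, flip_apply, mul_apply', tMulCLM_apply, tMul_inl_left, inl_apply]

theorem comp_tMulCLM_comp_inl (F : StrongDual ℂ (A × B)) (u : A × B) :
    (F.comp (tMulCLM T u)).comp (inl ℂ A B) = (F.comp (inl ℂ A B)).comp (mul ℂ A (u.1 + T u.2)) :=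
  ext fun x => by simp only [comp_apply, mul_apply', tMulCLM_apply, tMul_inl_right, inl_apply]

theorem comp_tMulCLM_flip_inl_comp_inr (F : StrongDual ℂ (A × B)) (a : A) :
    (F.comp ((tMulCLM T).flip (a, 0))).comp (inr ℂ A B) =
      ((F.comp (inl ℂ A B)).comp ((mul ℂ A).flip a)).comp T :=
  ext fun y => by simp [tMulCLM_apply, tMul_inl_right]

theorem comp_tMulCLM_inl_comp_inr (F : StrongDual ℂ (A × B)) (a : A) :
    (F.comp (tMulCLM T (a, 0))).comp (inr ℂ A B) = ((F.comp (inl ℂ A B)).comp (mul ℂ A a)).comp T :=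
  ext fun y => by simp [tMulCLM_apply, tMul_inl_left]

variable {T}

theorem isInnerMean_Theta_zero {φ : A →L[ℂ] ℂ} {m : StrongDual ℂ (StrongDual ℂ A)}
    (hm : IsInnerMean (mul ℂ A) φ m) :
    IsInnerMean (tMulCLM T) (charExt T φ) (Theta m (0 : StrongDual ℂ (StrongDual ℂ B))) := by
  obtain ⟨hmφ, hm_comm⟩ := hm
  refine ⟨by simp [Theta_apply, charExt_comp_inl, hmφ], fun u => ?_⟩
  refine (arens1_inclusionInDoubleDual_comm_iff _ _ _).mpr fun F => ?_
  simpa [Theta_apply, comp_tMulCLM_flip_comp_inl, comp_tMulCLM_comp_inl] using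
    (arens1_inclusionInDoubleDual_comm_iff _ _ _).mp (hm_comm (u.1 + T u.2)) (F.comp (inl ℂ A B))

theorem isInnerMean_add_ddT {φ : A →L[ℂ] ℂ} {m : StrongDual ℂ (StrongDual ℂ A)}
    {n : StrongDual ℂ (StrongDual ℂ B)} (h : IsInnerMean (tMulCLM T) (charExt T φ) (Theta m n)) :
    IsInnerMean (mul ℂ A) φ (m + ddT T n) := by
  obtain ⟨hφ, hcomm⟩ := h
  refine ⟨by simpa [Theta_apply, charExt_comp_inl, charExt_comp_inr, ddT_apply] using hφ,
    fun a => (arens1_inclusionInDoubleDual_comm_iff _ _ _).mpr fun f => ?_⟩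
  have key := (arens1_inclusionInDoubleDual_comm_iff _ _ _).mp (hcomm (a, 0)) (f.comp (fst ℂ A B))
  rw [Theta_apply, Theta_apply, comp_tMulCLM_flip_comp_inl, comp_tMulCLM_comp_inl,
    comp_tMulCLM_flip_inl_comp_inr, comp_tMulCLM_inl_comp_inr] at key
  have hf : (f.comp (fst ℂ A B)).comp (inl ℂ A B) = f := rfl
  simpa [hf, ddT_apply] using key

end MorphismProduct

theorem inner_amenable_charExt_general
    (T : B →L[ℂ] A)
    (φ : A →L[ℂ] ℂ) :
    ((∃ m : StrongDual ℂ (StrongDual ℂ A), m φ = 1 ∧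
        ∀ a : A, arens1 (mul ℂ A) m (inclusionInDoubleDual ℂ A a) =
          arens1 (mul ℂ A) (inclusionInDoubleDual ℂ A a) m) ↔
      (∃ M : StrongDual ℂ (StrongDual ℂ (A × B)), M (charExt T φ) = 1 ∧
        ∀ u : A × B, arens1 (tMulCLM T) M (inclusionInDoubleDual ℂ (A × B) u) =
          arens1 (tMulCLM T) (inclusionInDoubleDual ℂ (A × B) u) M)) ∧
    (∀ m : StrongDual ℂ (StrongDual ℂ A), m φ = 1 →
      (∀ a : A, arens1 (mul ℂ A) m (inclusionInDoubleDual ℂ A a) =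
        arens1 (mul ℂ A) (inclusionInDoubleDual ℂ A a) m) →
      (Theta m (0 : StrongDual ℂ (StrongDual ℂ B)) (charExt T φ) = 1 ∧
        ∀ u : A × B,
          arens1 (tMulCLM T) (Theta m 0) (inclusionInDoubleDual ℂ (A × B) u) =
            arens1 (tMulCLM T) (inclusionInDoubleDual ℂ (A × B) u) (Theta m 0))) ∧
    (∀ (m : StrongDual ℂ (StrongDual ℂ A)) (n : StrongDual ℂ (StrongDual ℂ B)),
      Theta m n (charExt T φ) = 1 →
      (∀ u : A × B,
        arens1 (tMulCLM T) (Theta m n) (inclusionInDoubleDual ℂ (A × B) u) =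
          arens1 (tMulCLM T) (inclusionInDoubleDual ℂ (A × B) u) (Theta m n)) →
      ((m + ddT T n) φ = 1 ∧
        ∀ a : A, arens1 (mul ℂ A) (m + ddT T n) (inclusionInDoubleDual ℂ A a) =
          arens1 (mul ℂ A) (inclusionInDoubleDual ℂ A a) (m + ddT T n))) := by
  refine ⟨⟨fun ⟨m, hm⟩ => ⟨Theta m 0, isInnerMean_Theta_zero hm⟩, fun ⟨M, hM⟩ => ?_⟩,
    fun m hφ hcomm => isInnerMean_Theta_zero ⟨hφ, hcomm⟩,
    fun m n hφ hcomm => isInnerMean_add_ddT ⟨hφ, hcomm⟩⟩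
  obtain ⟨m, n, rfl⟩ := Theta_surjective M
  exact ⟨m + ddT T n, isInnerMean_add_ddT hM⟩

/-- for `φ ∈ σ(A)`, `A` is `φ`-inner amenable iff `A ×_T B` is
`(φ,φ∘T)`-inner amenable; moreover if `m` is a `φ`-inner mean for `A` then `(m,0)` is
a `(φ,φ∘T)`-inner mean for `A ×_T B`, and if `(m,n)` is a `(φ,φ∘T)`-inner mean for
`A ×_T B` then `m + T''(n)` is a `φ`-inner mean for `A`. -/
theorem inner_amenable_charExt
    (T : B →L[ℂ] A) (hT : ∀ x y, T (x * y) = T x * T y) (hTn : ‖T‖ ≤ 1)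
    (φ : A →L[ℂ] ℂ) (hφ0 : φ ≠ 0) (hφm : ∀ x y : A, φ (x * y) = φ x * φ y) :
    ((∃ m : StrongDual ℂ (StrongDual ℂ A), m φ = 1 ∧
        ∀ a : A, arens1 (mul ℂ A) m (inclusionInDoubleDual ℂ A a) =
          arens1 (mul ℂ A) (inclusionInDoubleDual ℂ A a) m) ↔
      (∃ M : StrongDual ℂ (StrongDual ℂ (A × B)), M (charExt T φ) = 1 ∧
        ∀ u : A × B, arens1 (tMulCLM T) M (inclusionInDoubleDual ℂ (A × B) u) =
          arens1 (tMulCLM T) (inclusionInDoubleDual ℂ (A × B) u) M)) ∧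
    (∀ m : StrongDual ℂ (StrongDual ℂ A), m φ = 1 →
      (∀ a : A, arens1 (mul ℂ A) m (inclusionInDoubleDual ℂ A a) =
        arens1 (mul ℂ A) (inclusionInDoubleDual ℂ A a) m) →
      (Theta m (0 : StrongDual ℂ (StrongDual ℂ B)) (charExt T φ) = 1 ∧
        ∀ u : A × B,
          arens1 (tMulCLM T) (Theta m 0) (inclusionInDoubleDual ℂ (A × B) u) =
            arens1 (tMulCLM T) (inclusionInDoubleDual ℂ (A × B) u) (Theta m 0))) ∧
    (∀ (m : StrongDual ℂ (StrongDual ℂ A)) (n : StrongDual ℂ (StrongDual ℂ B)),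
      Theta m n (charExt T φ) = 1 →
      (∀ u : A × B,
        arens1 (tMulCLM T) (Theta m n) (inclusionInDoubleDual ℂ (A × B) u) =
          arens1 (tMulCLM T) (inclusionInDoubleDual ℂ (A × B) u) (Theta m n)) →
      ((m + ddT T n) φ = 1 ∧
        ∀ a : A, arens1 (mul ℂ A) (m + ddT T n) (inclusionInDoubleDual ℂ A a) =
          arens1 (mul ℂ A) (inclusionInDoubleDual ℂ A a) (m + ddT T n))) :=
  inner_amenable_charExt_general T φ
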